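/- Let κ > 0 and let θ, ω, Ξ be C² and H continuous on an open set Ω ⊆ ℝ², with 0 < ω < π/2 on Ω. Set G(ω) = (sin²ω/(κ+sin²ω))^((κ+1)/(2κ)), α = θ+ω, β = θ−ω, and ∂⁺f = cos(α)·f_x + sin(α)·f_y, ∂⁻f = cos(β)·f_x + sin(β)·f_y. Assume on Ω: ∂⁺θ + sin(2ω)·∂⁺Ξ = 0, ∂⁻θ − sin(2ω)·∂⁻Ξ = 0, ∂⁺ω = (2·sin(ω)·(κ+sin²ω)/cos(ω))·(∂⁺Ξ + G(ω)·H) and ∂⁻ω = (2·sin(ω)·(κ+sin²ω)/cos(ω))·(∂⁻Ξ − G(ω)·H). Then at every point of Ω the characteristic decomposition holds: ∂⁻(∂⁺Ξ) = [(κ·∂⁺Ξ + (κ+sin²ω)·G(ω)·H)/cos²ω]·(∂⁺Ξ − cos(2ω)·∂⁻Ξ) + (∂⁺Ξ/cos²ω)·(∂⁺Ξ + cos²(2ω)·∂⁻Ξ). -/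

import Mathlib

open Real Set
set_option maxHeartbeats 1000000


/-- Partial derivative in the `x`-direction. -/
noncomputable def px (f : ℝ × ℝ → ℝ) (p : ℝ × ℝ) : ℝ := fderiv ℝ f p (1, 0)

/-- Partial derivative in the `y`-direction. -/
noncomputable def py (f : ℝ × ℝ → ℝ) (p : ℝ × ℝ) : ℝ := fderiv ℝ f p (0, 1)

/-- Normalized directional derivative along the direction of inclination angle `a`. -/
noncomputable def dDir (a : ℝ × ℝ → ℝ) (f : ℝ × ℝ → ℝ) (p : ℝ × ℝ) : ℝ :=
  Real.cos (a p) * px f p + Real.sin (a p) * py f p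

/-- The function `G(ω) = (sin²ω/(κ+sin²ω))^((κ+1)/(2κ))`. -/
noncomputable def Gfun (κ ω : ℝ) : ℝ :=
  (Real.sin ω ^ 2 / (κ + Real.sin ω ^ 2)) ^ ((κ + 1) / (2 * κ))

lemma clm_vecF {F : Type*} [NormedAddCommGroup F] [NormedSpace ℝ F]
    (L : (ℝ × ℝ) →L[ℝ] F) (t : ℝ) :
    L (Real.cos t, Real.sin t) = Real.cos t • L (1, 0) + Real.sin t • L (0, 1) := by
  have h : ((Real.cos t, Real.sin t) : ℝ × ℝ)
      = Real.cos t • ((1:ℝ), (0:ℝ)) + Real.sin t • ((0:ℝ), (1:ℝ)) := by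
    simp [Prod.ext_iff]
  rw [h, map_add, map_smul, map_smul]

lemma clm_vec (L : (ℝ × ℝ) →L[ℝ] ℝ) (t : ℝ) :
    L (Real.cos t, Real.sin t) = Real.cos t * L (1, 0) + Real.sin t * L (0, 1) :=
  clm_vecF L t

lemma hasFDerivAt_pd (f : ℝ×ℝ→ℝ) (p w : ℝ×ℝ) (hf : ContDiffAt ℝ 2 f p) :
    HasFDerivAt (fun q => fderiv ℝ f q w) ((fderiv ℝ (fderiv ℝ f) p).flip w) p := by
  have h1 : ContDiffAt ℝ 1 (fderiv ℝ f) p := hf.fderiv_right (by norm_num)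
  have h2 : HasFDerivAt (fderiv ℝ f) (fderiv ℝ (fderiv ℝ f) p) p :=
    (h1.differentiableAt (by norm_num)).hasFDerivAt
  simpa using h2.clm_apply (hasFDerivAt_const w p)

lemma dDir_hasFDerivAt (A f : ℝ×ℝ→ℝ) (p : ℝ×ℝ) (hA : ContDiffAt ℝ 2 A p)
    (hf : ContDiffAt ℝ 2 f p) :
    HasFDerivAt (dDir A f)
      ((Real.cos (A p) * py f p - Real.sin (A p) * px f p) • fderiv ℝ A p
        + Real.cos (A p) • ((fderiv ℝ (fderiv ℝ f) p).flip (1,0))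
        + Real.sin (A p) • ((fderiv ℝ (fderiv ℝ f) p).flip (0,1))) p := by
  have hA' : HasFDerivAt A (fderiv ℝ A p) p := (hA.differentiableAt (by norm_num)).hasFDerivAt
  have hx := hasFDerivAt_pd f p (1,0) hf
  have hy := hasFDerivAt_pd f p (0,1) hf
  have h := (hA'.cos.mul hx).add (hA'.sin.mul hy)
  have he : (dDir A f) = fun q =>
      Real.cos (A q) * (fderiv ℝ f q (1,0)) + Real.sin (A q) * (fderiv ℝ f q (0,1)) := rfl
  rw [he]
  have h' : HasFDerivAt (fun q =>
      Real.cos (A q) * (fderiv ℝ f q (1,0)) + Real.sin (A q) * (fderiv ℝ f q (0,1))) _ p := h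
  refine h'.congr_fderiv ?_
  unfold px py
  module

lemma algebra_key (κ sw cw c2 s2 cA sA cB sB G h Xp Xm Tp Tm Wp Wm uθ wθ uΞ wΞ Sθ SΞ : ℝ)
    (hsw : sw ≠ 0) (hcw : cw ≠ 0)
    (hpy : sw^2 + cw^2 = 1)
    (hs2 : s2 = 2*sw*cw) (hc2 : c2 = 1 - 2*sw^2)
    (hcB : cB = cA*c2 + sA*s2) (hsB : sB = sA*c2 - cA*s2)
    (hTp : Tp = cA*uθ + sA*wθ) (hTm : Tm = cB*uθ + sB*wθ)
    (hXp : Xp = cA*uΞ + sA*wΞ) (hXm : Xm = cB*uΞ + sB*wΞ)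
    (h1 : Tp + s2*Xp = 0) (h2 : Tm - s2*Xm = 0)
    (h3 : Wp = (2*sw*(κ + sw^2)/cw) * (Xp + G*h))
    (E1 : (Tm+Wm)*(cA*wθ - sA*uθ) + Sθ
        + (s2*((Tm+Wm)*(cA*wΞ - sA*uΞ) + SΞ) + Xp*(c2*(2*Wm))) = 0)
    (E2 : (Tp-Wp)*(cB*wθ - sB*uθ) + Sθ
        - (s2*((Tp-Wp)*(cB*wΞ - sB*uΞ) + SΞ) + Xm*(c2*(2*Wp))) = 0) :
    (Tm+Wm)*(cA*wΞ - sA*uΞ) + SΞ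
      = ((κ*Xp + (κ+sw^2)*G*h)/cw^2)*(Xp - c2*Xm) + (Xp/cw^2)*(Xp + c2^2*Xm) := by
  have hs2ne : s2 ≠ 0 := by
    rw [hs2]; exact mul_ne_zero (mul_ne_zero two_ne_zero hsw) hcw
  have hc2s2 : c2^2 + s2^2 = 1 := by
    linear_combination (c2 + 1 - 2*sw^2)*hc2 + (s2 + 2*sw*cw)*hs2 + 4*sw^2*hpy
  have p1 : s2*(cA*wθ - sA*uθ) = c2*Tp - Tm := by
    linear_combination (-c2)*hTp + hTm + uθ*hcB + wθ*hsB
  have p2 : s2*(cB*wθ - sB*uθ) = Tp - c2*Tm := by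
    linear_combination (-1)*hTp + c2*hTm + (uθ*c2 + wθ*s2)*hcB + (wθ*c2 - uθ*s2)*hsB
      + (cA*uθ + sA*wθ)*hc2s2
  have p3 : s2*(cA*wΞ - sA*uΞ) = c2*Xp - Xm := by
    linear_combination (-c2)*hXp + hXm + uΞ*hcB + wΞ*hsB
  have p4 : s2*(cB*wΞ - sB*uΞ) = Xp - c2*Xm := by
    linear_combination (-1)*hXp + c2*hXm + (uΞ*c2 + wΞ*s2)*hcB + (wΞ*c2 - uΞ*s2)*hsB
      + (cA*uΞ + sA*wΞ)*hc2s2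
  have q1 : (Tm+Wm)*(c2*Tp-Tm) + s2*Sθ
      + ((Tm+Wm)*(c2*Xp-Xm)*s2 + s2^2*SΞ + s2*Xp*(c2*(2*Wm))) = 0 := by
    linear_combination s2*E1 - (Tm+Wm)*p1 - (s2*(Tm+Wm))*p3
  have q2 : (Tp-Wp)*(Tp-c2*Tm) + s2*Sθ
      - ((Tp-Wp)*(Xp-c2*Xm)*s2 + s2^2*SΞ + s2*Xm*(c2*(2*Wp))) = 0 := by
    linear_combination s2*E2 - (Tp-Wp)*p2 + (s2*(Tp-Wp))*p4
  have h1' : Tp = -(s2*Xp) := by linarith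
  have h2' : Tm = s2*Xm := by linarith
  have q3 : (Tm+Wm)*(c2*Tp-Tm) - (Tp-Wp)*(Tp-c2*Tm)
      + (Tm+Wm)*(c2*Xp-Xm)*s2 + (Tp-Wp)*(Xp-c2*Xm)*s2
      + 2*s2^2*SΞ + s2*Xp*(c2*(2*Wm)) + s2*Xm*(c2*(2*Wp)) = 0 := by
    linear_combination q1 - q2
  rw [h1', h2'] at q3
  rw [h2']
  have hXf : s2^2*((s2*Xm+Wm)*(cA*wΞ - sA*uΞ) + SΞ)
      = s2^2*Xp^2 + c2*s2^2*Xp*Xm + s2*Wp*(Xp - c2*Xm) := by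
    linear_combination s2*(s2*Xm+Wm)*p3 + (1/2)*q3
  have h3p : Wp*cw = 2*sw*(κ + sw^2)*(Xp + G*h) := by
    rw [h3]; field_simp
  rw [div_mul_eq_mul_div, div_mul_eq_mul_div, ← add_div,
    eq_div_iff (pow_ne_zero 2 hcw)]
  refine mul_left_cancel₀ (pow_ne_zero 2 hs2ne) ?_
  linear_combination cw^2*hXf + (s2*cw*(Xp-c2*Xm))*h3p
    + (4*sw^2*cw^2*(Xp^2+c2*Xp*Xm))*hpy - (4*sw^2*cw^2*c2*Xp*Xm)*hc2
    + ((s2+2*sw*cw)*(-((κ*Xp+(κ+sw^2)*G*h)*(Xp-c2*Xm)+Xp*(Xp+c2^2*Xm))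
        + cw^2*(Xp^2+c2*Xp*Xm)) + 2*sw*(κ+sw^2)*cw*(Xp-c2*Xm)*(Xp+G*h))*hs2

/-- the characteristic decomposition of `Ξ` along the plus
characteristic differentiated in the minus direction. -/
theorem characteristic_decomposition_Xi
    (κ : ℝ) (hκ : 0 < κ)
    (Ω : Set (ℝ × ℝ)) (hΩ : IsOpen Ω)
    (θ ω Ξ H : ℝ × ℝ → ℝ)
    (hθ : ContDiffOn ℝ 2 θ Ω) (hω : ContDiffOn ℝ 2 ω Ω) (hΞ : ContDiffOn ℝ 2 Ξ Ω)
    (hH : ContinuousOn H Ω)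
    (hωrange : ∀ p ∈ Ω, 0 < ω p ∧ ω p < π / 2)
    (heq1 : ∀ p ∈ Ω,
      dDir (fun q => θ q + ω q) θ p + Real.sin (2 * ω p) * dDir (fun q => θ q + ω q) Ξ p = 0)
    (heq2 : ∀ p ∈ Ω,
      dDir (fun q => θ q - ω q) θ p - Real.sin (2 * ω p) * dDir (fun q => θ q - ω q) Ξ p = 0)
    (heq3 : ∀ p ∈ Ω,
      dDir (fun q => θ q + ω q) ω p
        = (2 * Real.sin (ω p) * (κ + Real.sin (ω p) ^ 2) / Real.cos (ω p)) *
            (dDir (fun q => θ q + ω q) Ξ p + Gfun κ (ω p) * H p))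
    (heq4 : ∀ p ∈ Ω,
      dDir (fun q => θ q - ω q) ω p
        = (2 * Real.sin (ω p) * (κ + Real.sin (ω p) ^ 2) / Real.cos (ω p)) *
            (dDir (fun q => θ q - ω q) Ξ p - Gfun κ (ω p) * H p)) :
    ∀ p ∈ Ω,
      dDir (fun q => θ q - ω q) (fun q => dDir (fun z => θ z + ω z) Ξ q) p
        = ((κ * dDir (fun q => θ q + ω q) Ξ p + (κ + Real.sin (ω p) ^ 2) * Gfun κ (ω p) * H p)
              / Real.cos (ω p) ^ 2) *
            (dDir (fun q => θ q + ω q) Ξ p - Real.cos (2 * ω p) * dDir (fun q => θ q - ω q) Ξ p)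
          + (dDir (fun q => θ q + ω q) Ξ p / Real.cos (ω p) ^ 2) *
            (dDir (fun q => θ q + ω q) Ξ p
              + Real.cos (2 * ω p) ^ 2 * dDir (fun q => θ q - ω q) Ξ p) := by
  intro p hp
  have hmem : Ω ∈ nhds p := hΩ.mem_nhds hp
  have hθp : ContDiffAt ℝ 2 θ p := hθ.contDiffAt hmem
  have hωp : ContDiffAt ℝ 2 ω p := hω.contDiffAt hmem
  have hΞp : ContDiffAt ℝ 2 Ξ p := hΞ.contDiffAt hmem
  have hA : ContDiffAt ℝ 2 (fun q => θ q + ω q) p := hθp.add hωp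
  have hB : ContDiffAt ℝ 2 (fun q => θ q - ω q) p := hθp.sub hωp
  have hθd : DifferentiableAt ℝ θ p := hθp.differentiableAt two_ne_zero
  have hωd : DifferentiableAt ℝ ω p := hωp.differentiableAt two_ne_zero
  -- derivative facts for the first order operators
  have h2ω : HasFDerivAt (fun q => 2 * ω q) ((2:ℝ) • fderiv ℝ ω p) p :=
    hωd.hasFDerivAt.const_mul 2
  have hsin2 : HasFDerivAt (fun q => Real.sin (2 * ω q))
      (Real.cos (2 * ω p) • ((2:ℝ) • fderiv ℝ ω p)) p := h2ω.sin
  have hdAθ := dDir_hasFDerivAt (fun q => θ q + ω q) θ p hA hθp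
  have hdAΞ := dDir_hasFDerivAt (fun q => θ q + ω q) Ξ p hA hΞp
  have hdBθ := dDir_hasFDerivAt (fun q => θ q - ω q) θ p hB hθp
  have hdBΞ := dDir_hasFDerivAt (fun q => θ q - ω q) Ξ p hB hΞp
  -- equation 1 differentiated (its fderiv vanishes on Ω)
  have hF1 := hdAθ.add (hsin2.mul hdAΞ)
  have he1 : (fun q => dDir (fun z => θ z + ω z) θ q
      + Real.sin (2 * ω q) * dDir (fun z => θ z + ω z) Ξ q) =ᶠ[nhds p] (fun _ => (0:ℝ)) :=
    Filter.eventuallyEq_of_mem hmem heq1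
  have hzero1 : fderiv ℝ (fun q => dDir (fun z => θ z + ω z) θ q
      + Real.sin (2 * ω q) * dDir (fun z => θ z + ω z) Ξ q) p = 0 := by
    rw [he1.fderiv_eq]; simp
  have hD1 := hF1.fderiv.symm.trans hzero1
  have E1s := congrArg (fun L : (ℝ×ℝ) →L[ℝ] ℝ =>
    L (Real.cos (θ p - ω p), Real.sin (θ p - ω p))) hD1
  simp only [ContinuousLinearMap.add_apply, ContinuousLinearMap.smul_apply,
    ContinuousLinearMap.flip_apply, ContinuousLinearMap.zero_apply, smul_eq_mul] at E1s
  -- equation 2 differentiated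
  have hF2 := hdBθ.sub (hsin2.mul hdBΞ)
  have he2 : (fun q => dDir (fun z => θ z - ω z) θ q
      - Real.sin (2 * ω q) * dDir (fun z => θ z - ω z) Ξ q) =ᶠ[nhds p] (fun _ => (0:ℝ)) :=
    Filter.eventuallyEq_of_mem hmem heq2
  have hzero2 : fderiv ℝ (fun q => dDir (fun z => θ z - ω z) θ q
      - Real.sin (2 * ω q) * dDir (fun z => θ z - ω z) Ξ q) p = 0 := by
    rw [he2.fderiv_eq]; simp
  have hD2 := hF2.fderiv.symm.trans hzero2
  have E2s := congrArg (fun L : (ℝ×ℝ) →L[ℝ] ℝ =>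
    L (Real.cos (θ p + ω p), Real.sin (θ p + ω p))) hD2
  simp only [ContinuousLinearMap.add_apply, ContinuousLinearMap.sub_apply,
    ContinuousLinearMap.smul_apply,
    ContinuousLinearMap.flip_apply, ContinuousLinearMap.zero_apply, smul_eq_mul] at E2s
  -- first derivative rewrites
  have hsplitA : fderiv ℝ (fun q => θ q + ω q) p = fderiv ℝ θ p + fderiv ℝ ω p :=
    fderiv_add hθd hωd
  have hsplitB : fderiv ℝ (fun q => θ q - ω q) p = fderiv ℝ θ p - fderiv ℝ ω p :=
    fderiv_sub hθd hωd
  have hAvm : (fderiv ℝ (fun q => θ q + ω q) p) (Real.cos (θ p - ω p), Real.sin (θ p - ω p))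
      = dDir (fun q => θ q - ω q) θ p + dDir (fun q => θ q - ω q) ω p := by
    rw [hsplitA, ContinuousLinearMap.add_apply, clm_vec, clm_vec]; rfl
  have hBvp : (fderiv ℝ (fun q => θ q - ω q) p) (Real.cos (θ p + ω p), Real.sin (θ p + ω p))
      = dDir (fun q => θ q + ω q) θ p - dDir (fun q => θ q + ω q) ω p := by
    rw [hsplitB, ContinuousLinearMap.sub_apply, clm_vec, clm_vec]; rfl
  have hωvm : (fderiv ℝ ω p) (Real.cos (θ p - ω p), Real.sin (θ p - ω p))
      = dDir (fun q => θ q - ω q) ω p := by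
    rw [clm_vec]; rfl
  have hωvp : (fderiv ℝ ω p) (Real.cos (θ p + ω p), Real.sin (θ p + ω p))
      = dDir (fun q => θ q + ω q) ω p := by
    rw [clm_vec]; rfl
  -- second derivative symmetric rewrites
  have hsymθ := hθp.isSymmSndFDerivAt (by simp)
  have hsymΞ := hΞp.isSymmSndFDerivAt (by simp)
  have hQθm : Real.cos (θ p + ω p) *
        ((fderiv ℝ (fderiv ℝ θ) p) (Real.cos (θ p - ω p), Real.sin (θ p - ω p))) (1,0)
      + Real.sin (θ p + ω p) *
        ((fderiv ℝ (fderiv ℝ θ) p) (Real.cos (θ p - ω p), Real.sin (θ p - ω p))) (0,1)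
      = ((fderiv ℝ (fderiv ℝ θ) p) (Real.cos (θ p - ω p), Real.sin (θ p - ω p)))
          (Real.cos (θ p + ω p), Real.sin (θ p + ω p)) :=
    (clm_vec _ (θ p + ω p)).symm
  have hQΞm : Real.cos (θ p + ω p) *
        ((fderiv ℝ (fderiv ℝ Ξ) p) (Real.cos (θ p - ω p), Real.sin (θ p - ω p))) (1,0)
      + Real.sin (θ p + ω p) *
        ((fderiv ℝ (fderiv ℝ Ξ) p) (Real.cos (θ p - ω p), Real.sin (θ p - ω p))) (0,1)
      = ((fderiv ℝ (fderiv ℝ Ξ) p) (Real.cos (θ p - ω p), Real.sin (θ p - ω p)))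
          (Real.cos (θ p + ω p), Real.sin (θ p + ω p)) :=
    (clm_vec _ (θ p + ω p)).symm
  have hQθp : Real.cos (θ p - ω p) *
        ((fderiv ℝ (fderiv ℝ θ) p) (Real.cos (θ p + ω p), Real.sin (θ p + ω p))) (1,0)
      + Real.sin (θ p - ω p) *
        ((fderiv ℝ (fderiv ℝ θ) p) (Real.cos (θ p + ω p), Real.sin (θ p + ω p))) (0,1)
      = ((fderiv ℝ (fderiv ℝ θ) p) (Real.cos (θ p - ω p), Real.sin (θ p - ω p)))
          (Real.cos (θ p + ω p), Real.sin (θ p + ω p)) :=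
    (clm_vec _ (θ p - ω p)).symm.trans
      (hsymθ (Real.cos (θ p + ω p), Real.sin (θ p + ω p))
        (Real.cos (θ p - ω p), Real.sin (θ p - ω p)))
  have hQΞp : Real.cos (θ p - ω p) *
        ((fderiv ℝ (fderiv ℝ Ξ) p) (Real.cos (θ p + ω p), Real.sin (θ p + ω p))) (1,0)
      + Real.sin (θ p - ω p) *
        ((fderiv ℝ (fderiv ℝ Ξ) p) (Real.cos (θ p + ω p), Real.sin (θ p + ω p))) (0,1)
      = ((fderiv ℝ (fderiv ℝ Ξ) p) (Real.cos (θ p - ω p), Real.sin (θ p - ω p)))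
          (Real.cos (θ p + ω p), Real.sin (θ p + ω p)) :=
    (clm_vec _ (θ p - ω p)).symm.trans
      (hsymΞ (Real.cos (θ p + ω p), Real.sin (θ p + ω p))
        (Real.cos (θ p - ω p), Real.sin (θ p - ω p)))
  -- trig facts
  obtain ⟨hω0, hωπ⟩ := hωrange p hp
  have hcw : Real.cos (ω p) ≠ 0 :=
    ne_of_gt (Real.cos_pos_of_mem_Ioo ⟨by linarith [Real.pi_pos], hωπ⟩)
  have hsw : Real.sin (ω p) ≠ 0 :=
    ne_of_gt (Real.sin_pos_of_pos_of_lt_pi hω0 (by linarith [Real.pi_pos]))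
  have hpy : Real.sin (ω p)^2 + Real.cos (ω p)^2 = 1 := Real.sin_sq_add_cos_sq (ω p)
  have hs2 : Real.sin (2 * ω p) = 2 * Real.sin (ω p) * Real.cos (ω p) :=
    Real.sin_two_mul (ω p)
  have hc2 : Real.cos (2 * ω p) = 1 - 2 * Real.sin (ω p)^2 := by
    rw [Real.cos_two_mul]; nlinarith [hpy]
  have hsubB : θ p - ω p = (θ p + ω p) - 2 * ω p := by ring
  have hcB : Real.cos (θ p - ω p)
      = Real.cos (θ p + ω p) * Real.cos (2 * ω p) + Real.sin (θ p + ω p) * Real.sin (2 * ω p) := by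
    rw [hsubB, Real.cos_sub]
  have hsB : Real.sin (θ p - ω p)
      = Real.sin (θ p + ω p) * Real.cos (2 * ω p) - Real.cos (θ p + ω p) * Real.sin (2 * ω p) := by
    rw [hsubB, Real.sin_sub]
  -- the goal's left hand side
  have hdAΞ' : HasFDerivAt (fun q => dDir (fun z => θ z + ω z) Ξ q)
      ((Real.cos (θ p + ω p) * py Ξ p - Real.sin (θ p + ω p) * px Ξ p)
          • fderiv ℝ (fun q => θ q + ω q) p
        + Real.cos (θ p + ω p) • ((fderiv ℝ (fderiv ℝ Ξ) p).flip (1,0))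
        + Real.sin (θ p + ω p) • ((fderiv ℝ (fderiv ℝ Ξ) p).flip (0,1))) p := hdAΞ
  have hLHS : dDir (fun q => θ q - ω q) (fun q => dDir (fun z => θ z + ω z) Ξ q) p
      = (Real.cos (θ p + ω p) * py Ξ p - Real.sin (θ p + ω p) * px Ξ p)
          * (fderiv ℝ (fun q => θ q + ω q) p) (Real.cos (θ p - ω p), Real.sin (θ p - ω p))
        + Real.cos (θ p + ω p) *
          ((fderiv ℝ (fderiv ℝ Ξ) p) (Real.cos (θ p - ω p), Real.sin (θ p - ω p))) (1,0)
        + Real.sin (θ p + ω p) *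
          ((fderiv ℝ (fderiv ℝ Ξ) p) (Real.cos (θ p - ω p), Real.sin (θ p - ω p))) (0,1) := by
    show Real.cos (θ p - ω p) * px (fun q => dDir (fun z => θ z + ω z) Ξ q) p
        + Real.sin (θ p - ω p) * py (fun q => dDir (fun z => θ z + ω z) Ξ q) p = _
    unfold px py
    rw [hdAΞ'.fderiv]
    rw [clm_vecF (fderiv ℝ (fderiv ℝ Ξ) p) (θ p - ω p),
      clm_vec (fderiv ℝ (fun q => θ q + ω q) p) (θ p - ω p)]
    simp only [ContinuousLinearMap.add_apply, ContinuousLinearMap.smul_apply,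
      ContinuousLinearMap.flip_apply, smul_eq_mul]
    unfold px py
    ring
  -- assemble the scalar hypotheses and conclude via `algebra_key`
  have key := algebra_key κ (Real.sin (ω p)) (Real.cos (ω p))
      (Real.cos (2 * ω p)) (Real.sin (2 * ω p))
      (Real.cos (θ p + ω p)) (Real.sin (θ p + ω p))
      (Real.cos (θ p - ω p)) (Real.sin (θ p - ω p))
      (Gfun κ (ω p)) (H p)
      (dDir (fun q => θ q + ω q) Ξ p) (dDir (fun q => θ q - ω q) Ξ p)
      (dDir (fun q => θ q + ω q) θ p) (dDir (fun q => θ q - ω q) θ p)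
      (dDir (fun q => θ q + ω q) ω p) (dDir (fun q => θ q - ω q) ω p)
      (px θ p) (py θ p) (px Ξ p) (py Ξ p)
      (((fderiv ℝ (fderiv ℝ θ) p) (Real.cos (θ p - ω p), Real.sin (θ p - ω p)))
          (Real.cos (θ p + ω p), Real.sin (θ p + ω p)))
      (((fderiv ℝ (fderiv ℝ Ξ) p) (Real.cos (θ p - ω p), Real.sin (θ p - ω p)))
          (Real.cos (θ p + ω p), Real.sin (θ p + ω p)))
      hsw hcw hpy hs2 hc2 hcB hsB rfl rfl rfl rfl
      (heq1 p hp) (heq2 p hp) (heq3 p hp)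
      (by linear_combination E1s
            - (Real.cos (θ p + ω p) * py θ p - Real.sin (θ p + ω p) * px θ p
                + Real.sin (2 * ω p) * (Real.cos (θ p + ω p) * py Ξ p
                    - Real.sin (θ p + ω p) * px Ξ p)) * hAvm
            - hQθm - Real.sin (2 * ω p) * hQΞm
            - (2 * Real.cos (2 * ω p) * dDir (fun q => θ q + ω q) Ξ p) * hωvm)
      (by linear_combination E2s
            - (Real.cos (θ p - ω p) * py θ p - Real.sin (θ p - ω p) * px θ p
                - Real.sin (2 * ω p) * (Real.cos (θ p - ω p) * py Ξ p
                    - Real.sin (θ p - ω p) * px Ξ p)) * hBvp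
            - hQθp + Real.sin (2 * ω p) * hQΞp
            + (2 * Real.cos (2 * ω p) * dDir (fun q => θ q - ω q) Ξ p) * hωvp)
  rw [hLHS]
  linear_combination key
    + (Real.cos (θ p + ω p) * py Ξ p - Real.sin (θ p + ω p) * px Ξ p) * hAvm + hQΞm
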